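/- arXiv:math/0508548 — 5 statements merged into one kernel-verified Lean document; each statement's English description precedes it below -/
import Mathlib

section
/- Let A be an algebra with ternary term operations t_0, t_1, t_2 satisfying t_0(x,y,z)=x, t_0(x,x,y)=t_1(x,y,y), t_1(x,x,y)=t_2(x,y,y), and t_2(x,y,z)=z (Hagemann–Mitschke terms for 2-permutability, i.e. a Mal'tsev-style chain of length 2). Then for all congruences α, β, γ, δ of A, the relation α∩(β∘(α∩(γ∘(α∩δ)∘γ))∘β) equals α∩(γ∘(α∩(β∘(α∩δ)∘β))∘γ), where ∘ denotes relational composition. -/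
/-!
The Hagemann–Mitschke identities for two permutability make `t₁` a Mal'tsev term:
`t₁ x y y = x` and `t₁ x x y = y`. Given a witness chain
`a β x`, `x γ u`, `u (α ∩ δ) v`, `v γ y`, `y β b` with `x α y`, the points `t₁ a x u` and
`t₁ b y v` form a chain through the same middle pair `u, v` with the roles of `β` and `γ`
exchanged, and they are `α`-related because `a α b`, `x α y`, `u α v`. By symmetry of the
statement this gives both inclusions.
-/

/-- `t` preserves the binary relation `θ` (θ is compatible with `t`). -/
def PreservesRel {A : Type*} (t : A → A → A → A) (θ : A → A → Prop) : Prop :=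
  ∀ a a' b b' c c', θ a a' → θ b b' → θ c c' → θ (t a b c) (t a' b' c')

/-- The relation `α ∩ (β ∘ (α ∩ (γ ∘ (α ∩ δ) ∘ γ)) ∘ β)`. -/
def nestedMeetComp {A : Type*} (α β γ δ : A → A → Prop) (a b : A) : Prop :=
  α a b ∧ Relation.Comp (Relation.Comp β
    (fun x y => α x y ∧ Relation.Comp (Relation.Comp γ
      (fun u v => α u v ∧ δ u v)) γ x y)) β a b

theorem maltsev_of_hagemannMitschke {A : Type*} {t₀ t₁ t₂ : A → A → A → A}
    (h0 : ∀ x y z, t₀ x y z = x) (h01 : ∀ x y, t₀ x x y = t₁ x y y)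
    (h12 : ∀ x y, t₁ x x y = t₂ x y y) (h2 : ∀ x y z, t₂ x y z = z) :
    (∀ x y, t₁ x y y = x) ∧ (∀ x y, t₁ x x y = y) :=
  ⟨fun x y => by rw [← h01, h0], fun x y => by rw [h12, h2]⟩

theorem nestedMeetComp_swap_of_maltsev {A : Type*} {m : A → A → A → A}
    (hm₁ : ∀ x y, m x y y = x) (hm₂ : ∀ x y, m x x y = y)
    {α β γ : A → A → Prop} (δ : A → A → Prop) (hβ : ∀ a, β a a) (hγ : ∀ a, γ a a)
    (hmα : PreservesRel m α) (hmβ : PreservesRel m β) (hmγ : PreservesRel m γ)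
    {a b : A} (h : nestedMeetComp α β γ δ a b) : nestedMeetComp α γ β δ a b := by
  obtain ⟨hab, y, ⟨x, hax, hxy, v, ⟨u, hxu, huv, huvδ⟩, hvy⟩, hyb⟩ := h
  have hγ_left : γ a (m a x u) := by simpa only [hm₁] using hmγ a a x x x u (hγ a) (hγ x) hxu
  have hβ_left : β (m a x u) u := by simpa only [hm₂] using hmβ a x x x u u hax (hβ x) (hβ u)
  have hβ_right : β v (m b y v) := by simpa only [hm₂] using hmβ y b y y v v hyb (hβ y) (hβ v)
  have hγ_right : γ (m b y v) b := by simpa only [hm₁] using hmγ b b y y v y (hγ b) (hγ y) hvy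
  exact ⟨hab, m b y v,
    ⟨m a x u, hγ_left, hmα a b x y u v hab hxy huv, v, ⟨u, hβ_left, huv, huvδ⟩, hβ_right⟩,
    hγ_right⟩

theorem stmt0_general {A : Type*} (t₀ t₁ t₂ : A → A → A → A)
    (h0 : ∀ x y z, t₀ x y z = x)
    (h01 : ∀ x y, t₀ x x y = t₁ x y y)
    (h12 : ∀ x y, t₁ x x y = t₂ x y y)
    (h2 : ∀ x y z, t₂ x y z = z)
    (α β γ δ : A → A → Prop)
    (hβ : Equivalence β) (hγ : Equivalence γ)
    (hpres : ∀ t ∈ ([t₀, t₁, t₂] : List (A → A → A → A)),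
      ∀ θ ∈ ([α, β, γ, δ] : List (A → A → Prop)), PreservesRel t θ) :
    ∀ a b : A,
      (α a b ∧ Relation.Comp (Relation.Comp β
        (fun x y => α x y ∧ Relation.Comp (Relation.Comp γ
          (fun u v => α u v ∧ δ u v)) γ x y)) β a b)
      ↔
      (α a b ∧ Relation.Comp (Relation.Comp γ
        (fun x y => α x y ∧ Relation.Comp (Relation.Comp β
          (fun u v => α u v ∧ δ u v)) β x y)) γ a b) := by
  obtain ⟨hm₁, hm₂⟩ := maltsev_of_hagemannMitschke h0 h01 h12 h2
  have hpres₁ : ∀ θ ∈ ([α, β, γ, δ] : List (A → A → Prop)), PreservesRel t₁ θ :=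
    hpres t₁ (by simp)
  have hmα := hpres₁ α (by simp)
  have hmβ := hpres₁ β (by simp)
  have hmγ := hpres₁ γ (by simp)
  exact fun a b =>
    ⟨nestedMeetComp_swap_of_maltsev hm₁ hm₂ δ hβ.refl hγ.refl hmα hmβ hmγ,
      nestedMeetComp_swap_of_maltsev hm₁ hm₂ δ hγ.refl hβ.refl hmα hmγ hmβ⟩

/-- Hagemann–Mitschke terms for 2-permutability imply the identity (X₂):
α∩(β∘(α∩(γ∘(α∩δ)∘γ))∘β) = α∩(γ∘(α∩(β∘(α∩δ)∘β))∘γ). -/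
theorem stmt0 {A : Type*} (t₀ t₁ t₂ : A → A → A → A)
    (h0 : ∀ x y z, t₀ x y z = x)
    (h01 : ∀ x y, t₀ x x y = t₁ x y y)
    (h12 : ∀ x y, t₁ x x y = t₂ x y y)
    (h2 : ∀ x y z, t₂ x y z = z)
    (α β γ δ : A → A → Prop)
    (hα : Equivalence α) (hβ : Equivalence β) (hγ : Equivalence γ) (hδ : Equivalence δ)
    (hpres : ∀ t ∈ ([t₀, t₁, t₂] : List (A → A → A → A)),
      ∀ θ ∈ ([α, β, γ, δ] : List (A → A → Prop)), PreservesRel t θ) :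
    ∀ a b : A,
      (α a b ∧ Relation.Comp (Relation.Comp β
        (fun x y => α x y ∧ Relation.Comp (Relation.Comp γ
          (fun u v => α u v ∧ δ u v)) γ x y)) β a b)
      ↔
      (α a b ∧ Relation.Comp (Relation.Comp γ
        (fun x y => α x y ∧ Relation.Comp (Relation.Comp β
          (fun u v => α u v ∧ δ u v)) β x y)) γ a b) :=
  stmt0_general t₀ t₁ t₂ h0 h01 h12 h2 α β γ δ hβ hγ hpres
end

section
/- Let A be an algebra with ternary term operations t_0, t_1, t_2, t_3 satisfying t_0(x,y,z)=x, t_i(x,x,y)=t_{i+1}(x,y,y) for i=0,1,2, and t_3(x,y,z)=z (Hagemann–Mitschke terms for 3-permutability). Then for all congruences α, β, γ, δ of A: α∩(β∘(α∩(γ∘(α∩(β∘(α∩δ)∘β))∘γ))∘β) = α∩(γ∘(α∩(β∘(α∩(γ∘(α∩δ)∘γ))∘β))∘γ). -/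
namespace PreservesRel

variable {A : Type*} {t : A → A → A → A} {θ : A → A → Prop} {a a' b b' c c' : A}

theorem rel_left (ht : PreservesRel t θ) (hθ : ∀ x, θ x x) (h : θ a a') :
    θ (t a b c) (t a' b c) :=
  ht _ _ _ _ _ _ h (hθ b) (hθ c)

theorem rel_mid (ht : PreservesRel t θ) (hθ : ∀ x, θ x x) (h : θ b b') :
    θ (t a b c) (t a b' c) :=
  ht _ _ _ _ _ _ (hθ a) h (hθ c)

theorem rel_right (ht : PreservesRel t θ) (hθ : ∀ x, θ x x) (h : θ c c') :
    θ (t a b c) (t a b c') :=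
  ht _ _ _ _ _ _ (hθ a) (hθ b) h

theorem apply_rel_first (ht : PreservesRel t θ) (hθ : ∀ x, θ x x)
    (hid : ∀ x y, t x y y = x) (h : θ b c) : θ (t a b c) a := by
  have h' : θ (t a b c) (t a c c) := ht.rel_mid hθ h
  rwa [hid] at h'

theorem apply_rel_last (ht : PreservesRel t θ) (hθ : ∀ x, θ x x)
    (hid : ∀ x y, t x x y = y) (h : θ a b) : θ (t a b c) c := by
  have h' : θ (t a b c) (t b b c) := ht.rel_left hθ h
  rwa [hid] at h'

end PreservesRel

section Sandwich

variable {A : Type*}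

def meetSandwich (α θ ρ : A → A → Prop) : A → A → Prop :=
  α ⊓ Relation.Comp (Relation.Comp θ ρ) θ

theorem meetSandwich_nested_le_swap {t₁ t₂ : A → A → A → A} {α β γ δ : A → A → Prop}
    (ht₁ : ∀ x y, t₁ x y y = x) (ht₁₂ : ∀ x y, t₁ x x y = t₂ x y y)
    (ht₂ : ∀ x y, t₂ x x y = y)
    (hα : ∀ x, α x x) (hβ : Equivalence β) (hγ : Equivalence γ) (hδ : ∀ x, δ x x)
    (h₁α : PreservesRel t₁ α) (h₁β : PreservesRel t₁ β) (h₁γ : PreservesRel t₁ γ)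
    (h₂α : PreservesRel t₂ α) (h₂β : PreservesRel t₂ β) (h₂γ : PreservesRel t₂ γ)
    (h₂δ : PreservesRel t₂ δ) :
    meetSandwich α β (meetSandwich α γ (meetSandwich α β (α ⊓ δ))) ≤
      meetSandwich α γ (meetSandwich α β (meetSandwich α γ (α ⊓ δ))) := by
  rintro a b ⟨hab, y, ⟨x, hax, hxy, v, ⟨u, hxu, huv, q, ⟨p, hup, hpq, hpqδ⟩, hqv⟩, hvy⟩, hyb⟩
  have hyv := hγ.symm hvy
  have hshift : ∀ w, γ (t₁ w v y) w := fun w => h₁γ.apply_rel_first hγ.refl ht₁ hvy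
  have hu : γ (t₁ u y v) u := h₁γ.apply_rel_first hγ.refl ht₁ hyv
  refine ⟨hab, t₁ (t₁ b y v) v y, ⟨t₁ (t₁ a x u) v y, ?_, ?_,
    t₁ (t₂ y v q) v y, ⟨t₁ (t₂ x u p) v y, ?_, ?_,
      t₂ (t₁ u y v) u q, ⟨t₂ (t₁ u y v) u p, ?_, ?_, ?_⟩, ?_⟩, ?_⟩, ?_⟩
  · exact hγ.symm (hγ.trans (hshift _) (h₁γ.apply_rel_first hγ.refl ht₁ hxu))
  · exact h₁α.rel_left hα (h₁α _ _ _ _ _ _ hab hxy huv)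
  · have hxp : β (t₁ x x u) (t₂ x u p) := by
      rw [ht₁₂]
      exact h₂β.rel_right hβ.refl hup
    exact h₁β.rel_left hβ.refl (hβ.trans (h₁β.rel_left hβ.refl hax) hxp)
  · exact h₁α.rel_left hα (h₂α _ _ _ _ _ _ hxy huv hpq)
  · exact hγ.trans (hγ.trans (hshift _) (h₂γ.apply_rel_last hγ.refl ht₂ hxu))
      (hγ.symm (h₂γ.apply_rel_last hγ.refl ht₂ hu))
  · exact h₂α.rel_right hα hpq
  · exact h₂δ.rel_right hδ hpqδ
  · exact hγ.trans (h₂γ.apply_rel_last hγ.refl ht₂ hu)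
      (hγ.symm (hγ.trans (hshift _) (h₂γ.apply_rel_last hγ.refl ht₂ hyv)))
  · have hyq : β (t₂ y v q) (t₁ y y q) := by
      rw [ht₁₂]
      exact h₂β.rel_mid hβ.refl (hβ.symm hqv)
    exact h₁β.rel_left hβ.refl (hβ.trans hyq (h₁β _ _ _ _ _ _ hyb (hβ.refl y) hqv))
  · exact hγ.trans (hshift _) (h₁γ.apply_rel_first hγ.refl ht₁ hyv)

end Sandwich

/-- Hagemann–Mitschke terms for 3-permutability imply the identity (X₃):
α∩(β∘(α∩(γ∘(α∩(β∘(α∩δ)∘β))∘γ))∘β) = α∩(γ∘(α∩(β∘(α∩(γ∘(α∩δ)∘γ))∘β))∘γ). -/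
theorem stmt1 {A : Type*} (t₀ t₁ t₂ t₃ : A → A → A → A)
    (h0 : ∀ x y z, t₀ x y z = x)
    (h01 : ∀ x y, t₀ x x y = t₁ x y y)
    (h12 : ∀ x y, t₁ x x y = t₂ x y y)
    (h23 : ∀ x y, t₂ x x y = t₃ x y y)
    (h3 : ∀ x y z, t₃ x y z = z)
    (α β γ δ : A → A → Prop)
    (hα : Equivalence α) (hβ : Equivalence β) (hγ : Equivalence γ) (hδ : Equivalence δ)
    (hpres : ∀ t ∈ ([t₀, t₁, t₂, t₃] : List (A → A → A → A)),
      ∀ θ ∈ ([α, β, γ, δ] : List (A → A → Prop)), PreservesRel t θ) :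
    ∀ a b : A,
      (α a b ∧ Relation.Comp (Relation.Comp β
        (fun x y => α x y ∧ Relation.Comp (Relation.Comp γ
          (fun u v => α u v ∧ Relation.Comp (Relation.Comp β
            (fun p q => α p q ∧ δ p q)) β u v)) γ x y)) β a b)
      ↔
      (α a b ∧ Relation.Comp (Relation.Comp γ
        (fun x y => α x y ∧ Relation.Comp (Relation.Comp β
          (fun u v => α u v ∧ Relation.Comp (Relation.Comp γ
            (fun p q => α p q ∧ δ p q)) γ u v)) β x y)) γ a b) := by
  have ht₁ : ∀ x y, t₁ x y y = x := fun x y => (h01 x y).symm.trans (h0 x x y)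
  have ht₂ : ∀ x y, t₂ x x y = y := fun x y => (h23 x y).trans (h3 x y y)
  simp only [List.forall_mem_cons] at hpres
  obtain ⟨-, ⟨h₁α, h₁β, h₁γ, -⟩, ⟨h₂α, h₂β, h₂γ, h₂δ, -⟩, -⟩ := hpres
  intro a b
  exact ⟨meetSandwich_nested_le_swap ht₁ h12 ht₂ hα.refl hβ hγ hδ.refl
      h₁α h₁β h₁γ h₂α h₂β h₂γ h₂δ a b,
    meetSandwich_nested_le_swap ht₁ h12 ht₂ hα.refl hγ hβ hδ.refl
      h₁α h₁γ h₁β h₂α h₂γ h₂β h₂δ a b⟩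
end

section
/- Suppose (a_0, b_0) belongs to the left-hand side of the identity (X_m), i.e. there exist elements a_1,…,a_m and b_1,…,b_m with a_i α b_i for all i=0,…,m, a_m δ b_m, and a_i β a_{i+1}, b_i β b_{i+1} for even i < m, a_i γ a_{i+1}, b_i γ b_{i+1} for odd i < m, where α, β, γ, δ are congruences of an algebra A admitting Hagemann–Mitschke terms t_0,…,t_m (t_0(x,y,z)=x, t_i(x,x,y)=t_{i+1}(x,y,y), t_m(x,y,z)=z). Then defining c_i = t_i(a_{i-1},a_i,a_{i+1}) and d_i = t_i(b_{i-1},b_i,b_{i+1}) for 1 ≤ i ≤ m−1, and c_m = a_m, d_m = b_m, the elements c_i, d_i witness that (a_0,b_0) belongs to the right-hand side of (X_m): c_i α d_i for all i, c_m (α∩δ) d_m, a_0 γ c_1, b_0 γ d_1, and c_i, c_{i+1} (resp. d_i, d_{i+1}) are related by γ for even i and by β for odd i. -/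
section HagemannMitschke

variable {A : Type*} {m : ℕ} {t : ℕ → A → A → A → A}

def hmWitness (t : ℕ → A → A → A → A) (a : ℕ → A) (i : ℕ) : A :=
  t i (a (i - 1)) (a i) (a (i + 1))

theorem PreservesRel.hmWitness {θ : A → A → Prop} {i : ℕ} (ht : PreservesRel (t i) θ)
    {a b : ℕ → A} (hab : ∀ j, θ (a j) (b j)) : θ (hmWitness t a i) (hmWitness t b i) :=
  ht _ _ _ _ _ _ (hab _) (hab _) (hab _)

theorem hmWitness_rel_succ {θ : A → A → Prop} (hθ : Equivalence θ)
    (hpres : ∀ i ≤ m, PreservesRel (t i) θ) (hti : ∀ i < m, ∀ x y, t i x x y = t (i + 1) x y y)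
    {a : ℕ → A} {i : ℕ} (hi : i < m)
    (hprev : θ (a (i - 1)) (a i)) (hnext : θ (a (i + 1)) (a (i + 2))) :
    θ (hmWitness t a i) (hmWitness t a (i + 1)) := by
  have hleft : θ (hmWitness t a i) (t i (a i) (a i) (a (i + 1))) :=
    hpres i hi.le _ _ _ _ _ _ hprev (hθ.refl _) (hθ.refl _)
  have hright : θ (t (i + 1) (a i) (a (i + 1)) (a (i + 1))) (hmWitness t a (i + 1)) :=
    hpres (i + 1) hi _ _ _ _ _ _ (hθ.refl _) (hθ.refl _) hnext
  exact hθ.trans hleft (hti i hi _ _ ▸ hright)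

theorem rel_min_succ_of_forall_lt {θ : A → A → Prop} (hθ : ∀ x, θ x x) {p : ℕ → Prop}
    {a : ℕ → A} (h : ∀ j < m, p j → θ (a j) (a (j + 1))) (j : ℕ) (hj : p j) :
    θ (a (min j m)) (a (min (j + 1) m)) := by
  rcases lt_or_ge j m with hjm | hmj
  · rw [min_eq_left hjm.le, min_eq_left hjm]
    exact h j hjm hj
  · rw [min_eq_right hmj, min_eq_right (hmj.trans j.le_succ)]
    exact hθ _

theorem eq_hmWitness_min (htm : ∀ x y z, t m x y z = z) {a c : ℕ → A}
    (hc : ∀ i, 1 ≤ i → i ≤ m - 1 → c i = t i (a (i - 1)) (a i) (a (i + 1))) (hcm : c m = a m)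
    {i : ℕ} (hi₁ : 1 ≤ i) (him : i ≤ m) : c i = hmWitness t (fun j => a (min j m)) i := by
  rcases him.lt_or_eq with him | rfl
  · rw [hmWitness, min_eq_left (by omega : i - 1 ≤ m), min_eq_left him.le,
      min_eq_left (by omega : i + 1 ≤ m)]
    exact hc i hi₁ (by omega)
  · simp only [hmWitness, htm, hcm, min_eq_right (Nat.le_succ i)]

theorem hmWitness_zero (ht0 : ∀ x y z, t 0 x y z = x) (a : ℕ → A) : hmWitness t a 0 = a 0 :=
  ht0 _ _ _

theorem hmWitness_chain {β γ : A → A → Prop} (hm : 1 ≤ m)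
    (ht0 : ∀ x y z, t 0 x y z = x) (hti : ∀ i < m, ∀ x y, t i x x y = t (i + 1) x y y)
    (htm : ∀ x y z, t m x y z = z) (hβ : Equivalence β) (hγ : Equivalence γ)
    (hβpres : ∀ i ≤ m, PreservesRel (t i) β) (hγpres : ∀ i ≤ m, PreservesRel (t i) γ)
    {a c : ℕ → A}
    (haβ : ∀ i < m, i % 2 = 0 → β (a i) (a (i + 1)))
    (haγ : ∀ i < m, i % 2 = 1 → γ (a i) (a (i + 1)))
    (hc : ∀ i, 1 ≤ i → i ≤ m - 1 → c i = t i (a (i - 1)) (a i) (a (i + 1))) (hcm : c m = a m) :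
    γ (a 0) (c 1) ∧
    ∀ i, 1 ≤ i → i < m →
      (i % 2 = 0 → γ (c i) (c (i + 1))) ∧ (i % 2 = 1 → β (c i) (c (i + 1))) := by
  have hc' : ∀ i, 1 ≤ i → i ≤ m → c i = hmWitness t (fun j => a (min j m)) i :=
    fun i hi₁ him => eq_hmWitness_min htm hc hcm hi₁ him
  have hβ' := rel_min_succ_of_forall_lt hβ.refl haβ
  have hγ' := rel_min_succ_of_forall_lt hγ.refl haγ
  refine ⟨?_, fun i hi₁ him => ⟨fun heven => ?_, fun hodd => ?_⟩⟩
  · have h₀ : hmWitness t (fun j => a (min j m)) 0 = a 0 := by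
      rw [hmWitness_zero ht0, Nat.zero_min]
    rw [hc' 1 le_rfl hm, ← h₀]
    exact hmWitness_rel_succ hγ hγpres hti hm (hγ.refl _) (hγ' 1 rfl)
  · have hprev := hγ' (i - 1) (by omega)
    rw [Nat.sub_add_cancel hi₁] at hprev
    rw [hc' i hi₁ him.le, hc' (i + 1) (by omega) him]
    exact hmWitness_rel_succ hγ hγpres hti him hprev (hγ' (i + 1) (by omega))
  · have hprev := hβ' (i - 1) (by omega)
    rw [Nat.sub_add_cancel hi₁] at hprev
    rw [hc' i hi₁ him.le, hc' (i + 1) (by omega) him]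
    exact hmWitness_rel_succ hβ hβpres hti him hprev (hβ' (i + 1) (by omega))

end HagemannMitschke

theorem stmt2_general {A : Type*} (m : ℕ) (hm : 1 ≤ m)
    (t : ℕ → A → A → A → A)
    (ht0 : ∀ x y z, t 0 x y z = x)
    (hti : ∀ i < m, ∀ x y, t i x x y = t (i + 1) x y y)
    (htm : ∀ x y z, t m x y z = z)
    (α β γ δ : A → A → Prop)
    (hβ : Equivalence β) (hγ : Equivalence γ)
    (hpres : ∀ i ≤ m, ∀ θ ∈ ([α, β, γ, δ] : List (A → A → Prop)), PreservesRel (t i) θ)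
    (a b c d : ℕ → A)
    (hab : ∀ i ≤ m, α (a i) (b i))
    (habδ : δ (a m) (b m))
    (haβ : ∀ i < m, i % 2 = 0 → β (a i) (a (i + 1)))
    (hbβ : ∀ i < m, i % 2 = 0 → β (b i) (b (i + 1)))
    (haγ : ∀ i < m, i % 2 = 1 → γ (a i) (a (i + 1)))
    (hbγ : ∀ i < m, i % 2 = 1 → γ (b i) (b (i + 1)))
    (hc : ∀ i, 1 ≤ i → i ≤ m - 1 → c i = t i (a (i - 1)) (a i) (a (i + 1)))
    (hcm : c m = a m)
    (hd : ∀ i, 1 ≤ i → i ≤ m - 1 → d i = t i (b (i - 1)) (b i) (b (i + 1)))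
    (hdm : d m = b m) :
    (∀ i, 1 ≤ i → i ≤ m → α (c i) (d i)) ∧
    (α (c m) (d m) ∧ δ (c m) (d m)) ∧
    γ (a 0) (c 1) ∧ γ (b 0) (d 1) ∧
    (∀ i, 1 ≤ i → i < m →
      (i % 2 = 0 → γ (c i) (c (i + 1)) ∧ γ (d i) (d (i + 1))) ∧
      (i % 2 = 1 → β (c i) (c (i + 1)) ∧ β (d i) (d (i + 1)))) := by
  have hpres' : ∀ θ ∈ ([α, β, γ, δ] : List (A → A → Prop)), ∀ i ≤ m, PreservesRel (t i) θ :=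
    fun θ hθ i hi => hpres i hi θ hθ
  obtain ⟨hac, hc_chain⟩ := hmWitness_chain hm ht0 hti htm hβ hγ
    (hpres' β (by simp)) (hpres' γ (by simp)) haβ haγ hc hcm
  obtain ⟨hbd, hd_chain⟩ := hmWitness_chain hm ht0 hti htm hβ hγ
    (hpres' β (by simp)) (hpres' γ (by simp)) hbβ hbγ hd hdm
  refine ⟨fun i hi₁ him => ?_, ⟨hcm ▸ hdm ▸ hab m le_rfl, hcm ▸ hdm ▸ habδ⟩, hac, hbd,
    fun i hi₁ him => ⟨fun heven => ⟨(hc_chain i hi₁ him).1 heven, (hd_chain i hi₁ him).1 heven⟩,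
      fun hodd => ⟨(hc_chain i hi₁ him).2 hodd, (hd_chain i hi₁ him).2 hodd⟩⟩⟩
  rw [eq_hmWitness_min htm hc hcm hi₁ him, eq_hmWitness_min htm hd hdm hi₁ him]
  exact (hpres' α (by simp) i him).hmWitness fun j => hab _ (min_le_right j m)

/-- Given a witness (a₀,…,a_m, b₀,…,b_m) that (a₀,b₀) is in the left-hand side of (X_m),
and Hagemann–Mitschke terms t₀,…,t_m, the elements c_i = t_i(a_{i-1},a_i,a_{i+1}),
d_i = t_i(b_{i-1},b_i,b_{i+1}) (1 ≤ i ≤ m−1), c_m = a_m, d_m = b_m witness that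
(a₀,b₀) is in the right-hand side of (X_m). -/
theorem stmt2 {A : Type*} (m : ℕ) (hm : 1 ≤ m)
    (t : ℕ → A → A → A → A)
    (ht0 : ∀ x y z, t 0 x y z = x)
    (hti : ∀ i < m, ∀ x y, t i x x y = t (i + 1) x y y)
    (htm : ∀ x y z, t m x y z = z)
    (α β γ δ : A → A → Prop)
    (hα : Equivalence α) (hβ : Equivalence β) (hγ : Equivalence γ) (hδ : Equivalence δ)
    (hpres : ∀ i ≤ m, ∀ θ ∈ ([α, β, γ, δ] : List (A → A → Prop)), PreservesRel (t i) θ)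
    (a b c d : ℕ → A)
    (hab : ∀ i ≤ m, α (a i) (b i))
    (habδ : δ (a m) (b m))
    (haβ : ∀ i < m, i % 2 = 0 → β (a i) (a (i + 1)))
    (hbβ : ∀ i < m, i % 2 = 0 → β (b i) (b (i + 1)))
    (haγ : ∀ i < m, i % 2 = 1 → γ (a i) (a (i + 1)))
    (hbγ : ∀ i < m, i % 2 = 1 → γ (b i) (b (i + 1)))
    (hc : ∀ i, 1 ≤ i → i ≤ m - 1 → c i = t i (a (i - 1)) (a i) (a (i + 1)))
    (hcm : c m = a m)
    (hd : ∀ i, 1 ≤ i → i ≤ m - 1 → d i = t i (b (i - 1)) (b i) (b (i + 1)))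
    (hdm : d m = b m) :
    (∀ i, 1 ≤ i → i ≤ m → α (c i) (d i)) ∧
    (α (c m) (d m) ∧ δ (c m) (d m)) ∧
    γ (a 0) (c 1) ∧ γ (b 0) (d 1) ∧
    (∀ i, 1 ≤ i → i < m →
      (i % 2 = 0 → γ (c i) (c (i + 1)) ∧ γ (d i) (d (i + 1))) ∧
      (i % 2 = 1 → β (c i) (c (i + 1)) ∧ β (d i) (d (i + 1)))) :=
  stmt2_general m hm t ht0 hti htm α β γ δ hβ hγ hpres a b c d hab habδ haβ hbβ haγ hbγ hc hcm hd
    hdm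
end

section
/- Let A be an algebra with Hagemann–Mitschke terms t_0,…,t_m (t_0(x,y,z)=x, t_i(x,x,y)=t_{i+1}(x,y,y) for 0 ≤ i ≤ m−1, t_m(x,y,z)=z). Let R_0,…,R_m be arbitrary relations on A and S_1,…,S_m, T_1,…,T_m reflexive relations on A. Define R'_i as the least compatible relation containing R_{i−1} ∪ R_i ∪ R_{i+1} for 1 ≤ i ≤ m−1; S'_1 = closure of S_2, T'_1 = closure of T_2, S'_m = closure of S_{m−1}, T'_m = closure of T_{m−1}; and S'_i = (closure of S_{i−1}) ∘ (closure of S_{i+1}), T'_i = (closure of T_{i+1}) ∘ (closure of T_{i−1}) for 2 ≤ i ≤ m−1, where 'closure of X' means the least compatible relation containing X. Then R_0 ∩ (S_1 ∘ R_1∩(S_2 ∘ R_2∩(… R_{m−1}∩(S_m ∘ R_m ∘ T_m) … ∘ T_2) ∘ T_1) ⊆ R_0 ∩ (S'_1 ∘ R'_1∩(S'_2 ∘ … R'_{m−1}∩(S'_m ∘ R_m ∘ T'_m) … ∘ T'_2) ∘ T'_1). -/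
/-!
Write a pair `(a, b)` of the left-hand side as two chains `a = x₀ S₁ x₁ S₂ ⋯ S_m x_m` and
`y_m T_m ⋯ y₁ T₁ y₀ = b` with `x_i R_i y_i`, and replace them by
`u_i = t_i(x_{i-1}, x_i, x_{i+1})` and `v_i = t_i(y_{i-1}, y_i, y_{i+1})`. The end terms of the
Hagemann–Mitschke sequence give `u₀ = a`, `v₀ = b`, `u_m = x_m`, `v_m = y_m`, and `t_i` applied
coordinatewise gives `u_i R'_i v_i`. The identity
`t_{i-1}(x_{i-1}, x_{i-1}, x_i) = t_i(x_{i-1}, x_i, x_i)` splits the step from `u_{i-1}` to `u_i`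
into a move of the first argument of `t_{i-1}` along `S_{i-1}` followed by a move of the third
argument of `t_i` along `S_{i+1}`; since the `S_j` are reflexive, this is an `S'_i`-step. The
`T`-chain is the same argument for the converse relations.
-/

/-- A binary relation `R` is compatible with the algebra given by the
operations `ops` if it is preserved by every (basic) operation. -/
def Compatible {A ι : Type*} {ar : ι → ℕ} (ops : ∀ i : ι, (Fin (ar i) → A) → A)
    (R : A → A → Prop) : Prop :=
  ∀ i (f g : Fin (ar i) → A), (∀ k, R (f k) (g k)) → R (ops i f) (ops i g)

/-- The least compatible relation containing `X`. -/
def Bar {A ι : Type*} {ar : ι → ℕ} (ops : ∀ i : ι, (Fin (ar i) → A) → A)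
    (X : A → A → Prop) : A → A → Prop :=
  fun a b => ∀ R : A → A → Prop, Compatible ops R → (∀ x y, X x y → R x y) → R a b

/-- `Nest R S T k` is the relation `R k ∩ (S k ∘ (… ∩ (S 1 ∘ R 0 ∘ T 1) …) ∘ T k)`. -/
def Nest {A : Type*} (R S T : ℕ → A → A → Prop) : ℕ → A → A → Prop
  | 0 => R 0
  | k + 1 => fun a b => R (k + 1) a b ∧
      Relation.Comp (Relation.Comp (S (k + 1)) (Nest R S T k)) (T (k + 1)) a b

section Closure

variable {A ι : Type*} {ar : ι → ℕ} (ops : ∀ i : ι, (Fin (ar i) → A) → A)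

theorem compatible_bar (X : A → A → Prop) : Compatible ops (Bar ops X) :=
  fun i f g h _ hR hX => hR i f g fun k => h k _ hR hX

theorem le_bar {X : A → A → Prop} {x y : A} (h : X x y) : Bar ops X x y :=
  fun _ _ hX => hX x y h

theorem bar_refl {X : A → A → Prop} (hX : ∀ a, X a a) (a : A) : Bar ops X a a :=
  le_bar ops (hX a)

theorem Compatible.flip {R : A → A → Prop} (hR : Compatible ops R) : Compatible ops (flip R) :=
  fun i f g h => hR i g f h

theorem flip_bar (X : A → A → Prop) : flip (Bar ops X) = Bar ops (flip X) := by
  ext a b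
  exact ⟨fun h R hR hX => h (flip R) hR.flip fun x y hxy => hX y x hxy,
    fun h R hR hX => h (flip R) hR.flip fun x y hxy => hX y x hxy⟩

end Closure

section Preserves

variable {A : Type*} {t : A → A → A → A} {θ : A → A → Prop}

theorem PreservesRel.rel_first (h : PreservesRel t θ) (hθ : ∀ a, θ a a) {p q : A} (hpq : θ p q)
    (b c : A) : θ (t p b c) (t q b c) :=
  h _ _ _ _ _ _ hpq (hθ b) (hθ c)

theorem PreservesRel.rel_third (h : PreservesRel t θ) (hθ : ∀ a, θ a a) (a b : A) {p q : A}
    (hpq : θ p q) : θ (t a b p) (t a b q) :=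
  h _ _ _ _ _ _ (hθ a) (hθ b) hpq

end Preserves

section Nest

variable {A : Type*} {R S T : ℕ → A → A → Prop}

theorem nest_iff {k : ℕ} {a b : A} :
    Nest R S T k a b ↔ ∃ x y : ℕ → A, x k = a ∧ y k = b ∧ (∀ j ≤ k, R j (x j) (y j)) ∧
      (∀ j < k, S (j + 1) (x (j + 1)) (x j)) ∧ (∀ j < k, T (j + 1) (y j) (y (j + 1))) := by
  induction k generalizing a b with
  | zero =>
    refine ⟨fun h => ⟨fun _ => a, fun _ => b, rfl, rfl, ?_, by simp, by simp⟩, ?_⟩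
    · intro j hj
      obtain rfl : j = 0 := by omega
      exact h
    · rintro ⟨x, y, rfl, rfl, hR, -, -⟩
      exact hR 0 le_rfl
  | succ k ih =>
    simp only [Nest, Relation.Comp, ih]
    constructor
    · rintro ⟨hab, _, ⟨_, hS₀, x, y, rfl, rfl, hR, hS, hT⟩, hT₀⟩
      refine ⟨Function.update x (k + 1) a, Function.update y (k + 1) b, by simp, by simp,
        ?_, ?_, ?_⟩
      · intro j hj
        rcases Nat.lt_or_eq_of_le hj with hj | rfl
        · simpa [hj.ne] using hR j (by omega)
        · simpa using hab
      · intro j hj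
        rcases Nat.lt_or_eq_of_le (Nat.le_of_lt_succ hj) with hj | rfl
        · simpa [hj.ne, (Nat.lt_succ_of_lt hj).ne] using hS j hj
        · simpa using hS₀
      · intro j hj
        rcases Nat.lt_or_eq_of_le (Nat.le_of_lt_succ hj) with hj | rfl
        · simpa [hj.ne, (Nat.lt_succ_of_lt hj).ne] using hT j hj
        · simpa using hT₀
    · rintro ⟨x, y, rfl, rfl, hR, hS, hT⟩
      exact ⟨hR _ le_rfl, y k, ⟨x k, hS k k.lt_succ_self, x, y, rfl, rfl,
        fun j hj => hR j (by omega), fun j hj => hS j (by omega), fun j hj => hT j (by omega)⟩,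
        hT k k.lt_succ_self⟩

theorem nest_rev_iff {m : ℕ} {a b : A} :
    Nest (fun k => R (m - k)) (fun k => S (m + 1 - k)) (fun k => T (m + 1 - k)) m a b ↔
      ∃ x y : ℕ → A, x 0 = a ∧ y 0 = b ∧ (∀ i ≤ m, R i (x i) (y i)) ∧
        (∀ i < m, S (i + 1) (x i) (x (i + 1))) ∧ (∀ i < m, T (i + 1) (y (i + 1)) (y i)) := by
  rw [nest_iff]
  -- `i ↦ m - i` is an involution of `{0, …, m}`, so both directions are the same reindexing.
  constructor
  all_goals
    rintro ⟨x, y, rfl, rfl, hR, hS, hT⟩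
    refine ⟨fun i => x (m - i), fun i => y (m - i), by simp, by simp, ?_, ?_, ?_⟩
    · intro i hi
      convert hR (m - i) (by omega) using 2 <;> omega
    · intro i hi
      convert hS (m - i - 1) (by omega) using 2 <;> omega
    · intro i hi
      convert hT (m - i - 1) (by omega) using 2 <;> omega

end Nest

/-- `preserves` expresses that the `t i` are term operations of the algebra. -/
structure HagemannMitschkeTerms {A ι : Type*} {ar : ι → ℕ}
    (ops : ∀ i : ι, (Fin (ar i) → A) → A) (m : ℕ) (t : ℕ → A → A → A → A) : Prop where
  first : ∀ x y z, t 0 x y z = x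
  step : ∀ i < m, ∀ x y, t i x x y = t (i + 1) x y y
  last : ∀ x y z, t m x y z = z
  preserves : ∀ i ≤ m, ∀ R : A → A → Prop, Compatible ops R → PreservesRel (t i) R

-- The last argument is clamped at index `m`, so that `hmShift t m x m = x m`.
def hmShift {A : Type*} (t : ℕ → A → A → A → A) (m : ℕ) (x : ℕ → A) (i : ℕ) : A :=
  t i (x (i - 1)) (x i) (x (min (i + 1) m))

theorem hmShift_of_lt {A : Type*} (t : ℕ → A → A → A → A) {m : ℕ} (x : ℕ → A) {i : ℕ}
    (hi : i < m) : hmShift t m x i = t i (x (i - 1)) (x i) (x (i + 1)) := by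
  rw [hmShift, min_eq_left hi]

namespace HagemannMitschkeTerms

variable {A ι : Type*} {ar : ι → ℕ} {ops : ∀ i : ι, (Fin (ar i) → A) → A} {m : ℕ}
  {t : ℕ → A → A → A → A}

theorem preservesRel_bar (ht : HagemannMitschkeTerms ops m t) {i : ℕ} (hi : i ≤ m)
    (X : A → A → Prop) : PreservesRel (t i) (Bar ops X) :=
  ht.preserves i hi _ (compatible_bar ops X)

theorem hmShift_zero (ht : HagemannMitschkeTerms ops m t) (x : ℕ → A) :
    hmShift t m x 0 = x 0 :=
  ht.first ..

theorem hmShift_self (ht : HagemannMitschkeTerms ops m t) (x : ℕ → A) :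
    hmShift t m x m = x m := by
  rw [hmShift, ht.last, min_eq_right m.le_succ]

theorem rel_hmShift (ht : HagemannMitschkeTerms ops m t) {R R' : ℕ → A → A → Prop}
    (hR'0 : R' 0 = R 0) (hR'm : R' m = R m)
    (hR' : ∀ i, 1 ≤ i → i ≤ m - 1 →
      R' i = Bar ops (fun a b => R (i - 1) a b ∨ R i a b ∨ R (i + 1) a b))
    {x y : ℕ → A} (hxy : ∀ i ≤ m, R i (x i) (y i)) :
    ∀ i ≤ m, R' i (hmShift t m x i) (hmShift t m y i) := by
  intro i hi
  rcases Nat.eq_zero_or_pos i with rfl | hi₀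
  · rw [hR'0, ht.hmShift_zero, ht.hmShift_zero]
    exact hxy 0 hi
  rcases Nat.lt_or_eq_of_le hi with hi | rfl
  · rw [hR' i hi₀ (by omega), hmShift_of_lt t x hi, hmShift_of_lt t y hi]
    exact ht.preservesRel_bar hi.le _ _ _ _ _ _ _ (le_bar ops (Or.inl (hxy _ (by omega))))
      (le_bar ops (Or.inr (Or.inl (hxy i hi.le)))) (le_bar ops (Or.inr (Or.inr (hxy _ hi))))
  · rw [hR'm, ht.hmShift_self, ht.hmShift_self]
    exact hxy _ le_rfl

theorem bar_hmShift_zero_one (ht : HagemannMitschkeTerms ops m t) (hm : 2 ≤ m)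
    {S : A → A → Prop} (hS : ∀ a, S a a) {x : ℕ → A} (hx : S (x 1) (x 2)) :
    Bar ops S (hmShift t m x 0) (hmShift t m x 1) := by
  have h := (ht.preservesRel_bar (i := 1) (by omega) S).rel_third (bar_refl ops hS) (x 0) (x 1)
    (le_bar ops hx)
  rw [← ht.step 0 (by omega), ht.first] at h
  rw [ht.hmShift_zero, hmShift_of_lt t x (by omega : 1 < m)]
  exact h

theorem comp_bar_hmShift (ht : HagemannMitschkeTerms ops m t) {j : ℕ} (hj : j + 2 < m)
    {S₁ S₃ : A → A → Prop} (hS₁ : ∀ a, S₁ a a) (hS₃ : ∀ a, S₃ a a) {x : ℕ → A}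
    (h₁ : S₁ (x j) (x (j + 1))) (h₃ : S₃ (x (j + 2)) (x (j + 3))) :
    Relation.Comp (Bar ops S₁) (Bar ops S₃) (hmShift t m x (j + 1)) (hmShift t m x (j + 2)) := by
  rw [hmShift_of_lt t x (by omega : j + 1 < m), hmShift_of_lt t x hj]
  refine ⟨t (j + 1) (x (j + 1)) (x (j + 1)) (x (j + 2)),
    (ht.preservesRel_bar (by omega) S₁).rel_first (bar_refl ops hS₁) (le_bar ops h₁) _ _, ?_⟩
  rw [ht.step (j + 1) (by omega)]
  exact (ht.preservesRel_bar hj.le S₃).rel_third (bar_refl ops hS₃) _ _ (le_bar ops h₃)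

theorem bar_hmShift_pred_self {j : ℕ} (ht : HagemannMitschkeTerms ops (j + 2) t)
    {S : A → A → Prop} (hS : ∀ a, S a a) {x : ℕ → A} (hx : S (x j) (x (j + 1))) :
    Bar ops S (hmShift t (j + 2) x (j + 1)) (hmShift t (j + 2) x (j + 2)) := by
  have h := (ht.preservesRel_bar (i := j + 1) (by omega) S).rel_first (bar_refl ops hS)
    (le_bar ops hx) (x (j + 1)) (x (j + 2))
  rw [ht.step (j + 1) (by omega), ht.last] at h
  rw [hmShift_of_lt t x (by omega : j + 1 < j + 2), ht.hmShift_self]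
  exact h

theorem rel_hmShift_succ (ht : HagemannMitschkeTerms ops m t) (hm : 2 ≤ m)
    {S S' : ℕ → A → A → Prop} (hS : ∀ i, 1 ≤ i → i ≤ m → ∀ a, S i a a)
    (hS'1 : S' 1 = Bar ops (S 2)) (hS'm : S' m = Bar ops (S (m - 1)))
    (hS' : ∀ i, 2 ≤ i → i ≤ m - 1 →
      S' i = Relation.Comp (Bar ops (S (i - 1))) (Bar ops (S (i + 1))))
    {x : ℕ → A} (hx : ∀ i < m, S (i + 1) (x i) (x (i + 1))) :
    ∀ i < m, S' (i + 1) (hmShift t m x i) (hmShift t m x (i + 1)) := by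
  rintro (_ | j) hj
  · rw [hS'1]
    exact ht.bar_hmShift_zero_one hm (hS 2 (by omega) hm) (hx 1 (by omega))
  show S' (j + 2) _ _
  rcases Nat.lt_or_eq_of_le (hj : j + 2 ≤ m) with hj | rfl
  · rw [hS' (j + 2) (by omega) (by omega)]
    exact ht.comp_bar_hmShift hj (hS _ (by omega) (by omega)) (hS _ (by omega) hj)
      (hx j (by omega)) (hx (j + 2) hj)
  · rw [hS'm]
    exact ht.bar_hmShift_pred_self (hS _ (by omega) (by omega)) (hx j (by omega))

theorem rel_hmShift_succ_flip (ht : HagemannMitschkeTerms ops m t) (hm : 2 ≤ m)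
    {T T' : ℕ → A → A → Prop} (hT : ∀ i, 1 ≤ i → i ≤ m → ∀ a, T i a a)
    (hT'1 : T' 1 = Bar ops (T 2)) (hT'm : T' m = Bar ops (T (m - 1)))
    (hT' : ∀ i, 2 ≤ i → i ≤ m - 1 →
      T' i = Relation.Comp (Bar ops (T (i + 1))) (Bar ops (T (i - 1))))
    {y : ℕ → A} (hy : ∀ i < m, T (i + 1) (y (i + 1)) (y i)) :
    ∀ i < m, T' (i + 1) (hmShift t m y (i + 1)) (hmShift t m y i) :=
  ht.rel_hmShift_succ hm (S := fun i => flip (T i)) (S' := fun i => flip (T' i)) hT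
    (by rw [hT'1, flip_bar]) (by rw [hT'm, flip_bar])
    (fun i h₁ h₂ => by rw [hT' i h₁ h₂, Relation.flip_comp, flip_bar, flip_bar]) hy

end HagemannMitschkeTerms

/-- Proposition XX: in an algebra with Hagemann–Mitschke terms t₀,…,t_m,
R₀ ∩ (S₁ ∘ R₁∩(S₂ ∘ … R_{m−1}∩(S_m ∘ R_m ∘ T_m) … ∘ T₂) ∘ T₁)
  ⊆ R₀ ∩ (S'₁ ∘ R'₁∩(S'₂ ∘ … R'_{m−1}∩(S'_m ∘ R_m ∘ T'_m) … ∘ T'₂) ∘ T'₁). -/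
theorem stmt3 {A ι : Type*} {ar : ι → ℕ} (ops : ∀ i : ι, (Fin (ar i) → A) → A)
    (m : ℕ) (hm : 2 ≤ m)
    (t : ℕ → A → A → A → A)
    (ht0 : ∀ x y z, t 0 x y z = x)
    (hti : ∀ i < m, ∀ x y, t i x x y = t (i + 1) x y y)
    (htm : ∀ x y z, t m x y z = z)
    (hterm : ∀ i ≤ m, ∀ R : A → A → Prop, Compatible ops R → PreservesRel (t i) R)
    (R S T R' S' T' : ℕ → A → A → Prop)
    (hSrefl : ∀ i, 1 ≤ i → i ≤ m → ∀ a, S i a a)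
    (hTrefl : ∀ i, 1 ≤ i → i ≤ m → ∀ a, T i a a)
    (hR'0 : R' 0 = R 0) (hR'm : R' m = R m)
    (hR' : ∀ i, 1 ≤ i → i ≤ m - 1 →
      R' i = Bar ops (fun a b => R (i - 1) a b ∨ R i a b ∨ R (i + 1) a b))
    (hS'1 : S' 1 = Bar ops (S 2)) (hS'm : S' m = Bar ops (S (m - 1)))
    (hS' : ∀ i, 2 ≤ i → i ≤ m - 1 →
      S' i = Relation.Comp (Bar ops (S (i - 1))) (Bar ops (S (i + 1))))
    (hT'1 : T' 1 = Bar ops (T 2)) (hT'm : T' m = Bar ops (T (m - 1)))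
    (hT' : ∀ i, 2 ≤ i → i ≤ m - 1 →
      T' i = Relation.Comp (Bar ops (T (i + 1))) (Bar ops (T (i - 1)))) :
    ∀ a b : A,
      Nest (fun k => R (m - k)) (fun k => S (m + 1 - k)) (fun k => T (m + 1 - k)) m a b →
      Nest (fun k => R' (m - k)) (fun k => S' (m + 1 - k)) (fun k => T' (m + 1 - k)) m a b := by
  have ht : HagemannMitschkeTerms ops m t := ⟨ht0, hti, htm, hterm⟩
  intro a b h
  obtain ⟨x, y, rfl, rfl, hR, hS, hT⟩ := nest_rev_iff.1 h
  rw [← ht.hmShift_zero x, ← ht.hmShift_zero y]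
  exact nest_rev_iff.2 ⟨_, _, rfl, rfl, ht.rel_hmShift hR'0 hR'm hR' hR,
    ht.rel_hmShift_succ hm hSrefl hS'1 hS'm hS' hS,
    ht.rel_hmShift_succ_flip hm hTrefl hT'1 hT'm hT' hT⟩
end

section
/- Let A be an algebra with a Mal'tsev term p (p(x,x,y) = y = p(y,x,x)). Then for all congruences α, β, γ, δ of A, the identity (X_2) holds, and in particular the identity (Y_1): α∩(β∘(α∩γ)∘β) = α∩(γ∘(α∩β)∘γ). -/
namespace PreservesRel

variable {A : Type*} {p : A → A → A → A} {R S : A → A → Prop}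

theorem inf (hR : PreservesRel p R) (hS : PreservesRel p S) :
    PreservesRel p (fun x y => R x y ∧ S x y) :=
  fun _ _ _ _ _ _ h₁ h₂ h₃ =>
    ⟨hR _ _ _ _ _ _ h₁.1 h₂.1 h₃.1, hS _ _ _ _ _ _ h₁.2 h₂.2 h₃.2⟩

theorem comp (hR : PreservesRel p R) (hS : PreservesRel p S) :
    PreservesRel p (Relation.Comp R S) := by
  rintro _ _ _ _ _ _ ⟨x, hx₁, hx₂⟩ ⟨y, hy₁, hy₂⟩ ⟨z, hz₁, hz₂⟩
  exact ⟨p x y z, hR _ _ _ _ _ _ hx₁ hy₁ hz₁, hS _ _ _ _ _ _ hx₂ hy₂ hz₂⟩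

theorem comp_swap (hp1 : ∀ x y, p x x y = y) (hp2 : ∀ x y, p y x x = y)
    (hR : PreservesRel p R) (hS : PreservesRel p S) (hRr : ∀ x, R x x) (hSr : ∀ x, S x x)
    {a b : A} (h : Relation.Comp R S a b) : Relation.Comp S R a b := by
  obtain ⟨x, hax, hxb⟩ := h
  refine ⟨p a x b, ?_, ?_⟩
  · simpa only [hp2] using hS a a x x x b (hSr a) (hSr x) hxb
  · simpa only [hp1] using hR a x x x b b hax (hRr x) (hRr b)

end PreservesRel

open PreservesRel

section

variable {A : Type*} {p : A → A → A → A} {α β γ δ : A → A → Prop}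

theorem maltsev_Y₁_mp (hp1 : ∀ x y, p x x y = y) (hp2 : ∀ x y, p y x x = y)
    (hα : Equivalence α) (hβ : Equivalence β) (hγ : ∀ x, γ x x)
    (hpα : PreservesRel p α) (hpβ : PreservesRel p β) (hpγ : PreservesRel p γ) {a b : A}
    (h : α a b ∧ Relation.Comp (Relation.Comp β (fun x y => α x y ∧ γ x y)) β a b) :
    α a b ∧ Relation.Comp (Relation.Comp γ (fun x y => α x y ∧ β x y)) γ a b := by
  obtain ⟨hab, t, hat, htb⟩ := h
  obtain ⟨c, ⟨hac, hγac⟩, hct⟩ :=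
    comp_swap hp1 hp2 hpβ (hpα.inf hpγ) hβ.refl (fun x => ⟨hα.refl x, hγ x⟩) hat
  exact ⟨hab, b, ⟨c, hγac, hα.trans (hα.symm hac) hab, hβ.trans hct htb⟩, hγ b⟩

theorem maltsev_X₂_mp (hp1 : ∀ x y, p x x y = y) (hp2 : ∀ x y, p y x x = y)
    (hα : Equivalence α) (hβ : Equivalence β) (hγ : ∀ x, γ x x) (hδ : ∀ x, δ x x)
    (hpα : PreservesRel p α) (hpβ : PreservesRel p β) (hpγ : PreservesRel p γ)
    (hpδ : PreservesRel p δ) {a b : A}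
    (h : α a b ∧ Relation.Comp (Relation.Comp β
        (fun x y => α x y ∧ Relation.Comp (Relation.Comp γ
          (fun u v => α u v ∧ δ u v)) γ x y)) β a b) :
    α a b ∧ Relation.Comp (Relation.Comp γ
        (fun x y => α x y ∧ Relation.Comp (Relation.Comp β
          (fun u v => α u v ∧ δ u v)) β x y)) γ a b := by
  -- Swapping `β ∘ θ` with `θ = α ∩ (γ ∘ (α ∩ δ) ∘ γ)` gives `a γ u (α ∩ δ) v γ c (α ∩ β) b`;
  -- swapping `γ ∘ (α ∩ β)` and then `(α ∩ δ) ∘ (α ∩ β)` moves the `β`-steps inside.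
  obtain ⟨hab, t, hat, htb⟩ := h
  have hαβr : ∀ x, α x x ∧ β x x := fun x => ⟨hα.refl x, hβ.refl x⟩
  have hαδr : ∀ x, α x x ∧ δ x x := fun x => ⟨hα.refl x, hδ x⟩
  obtain ⟨c, ⟨hac, v, ⟨u, hau, huv⟩, hvc⟩, hct⟩ :=
    comp_swap hp1 hp2 hpβ (hpα.inf ((hpγ.comp (hpα.inf hpδ)).comp hpγ)) hβ.refl
      (fun x => ⟨hα.refl x, x, ⟨x, hγ x, hαδr x⟩, hγ x⟩) hat
  have hcb : α c b ∧ β c b := ⟨hα.trans (hα.symm hac) hab, hβ.trans hct htb⟩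
  obtain ⟨w, hvw, hwb⟩ := comp_swap hp1 hp2 hpγ (hpα.inf hpβ) hγ hαβr ⟨c, hvc, hcb⟩
  obtain ⟨z, huz, hzw⟩ :=
    comp_swap hp1 hp2 (hpα.inf hpδ) (hpα.inf hpβ) hαδr hαβr ⟨v, huv, hvw⟩
  exact ⟨hab, w, ⟨u, hau, hα.trans huz.1 hzw.1, w, ⟨z, huz.2, hzw⟩, hβ.refl w⟩, hwb⟩

end

/-- An algebra with a Mal'tsev term p satisfies the identity (X₂):
α∩(β∘(α∩(γ∘(α∩δ)∘γ))∘β) = α∩(γ∘(α∩(β∘(α∩δ)∘β))∘γ),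
and in particular (Y₁): α∩(β∘(α∩γ)∘β) = α∩(γ∘(α∩β)∘γ). -/
theorem stmt13 {A : Type*} (p : A → A → A → A)
    (hp1 : ∀ x y, p x x y = y) (hp2 : ∀ x y, p y x x = y)
    (α β γ δ : A → A → Prop)
    (hα : Equivalence α) (hβ : Equivalence β) (hγ : Equivalence γ) (hδ : Equivalence δ)
    (hpres : ∀ θ ∈ ([α, β, γ, δ] : List (A → A → Prop)), PreservesRel p θ) :
    (∀ a b : A,
      (α a b ∧ Relation.Comp (Relation.Comp β
        (fun x y => α x y ∧ Relation.Comp (Relation.Comp γ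
          (fun u v => α u v ∧ δ u v)) γ x y)) β a b)
      ↔
      (α a b ∧ Relation.Comp (Relation.Comp γ
        (fun x y => α x y ∧ Relation.Comp (Relation.Comp β
          (fun u v => α u v ∧ δ u v)) β x y)) γ a b)) ∧
    (∀ a b : A,
      (α a b ∧ Relation.Comp (Relation.Comp β (fun x y => α x y ∧ γ x y)) β a b)
      ↔
      (α a b ∧ Relation.Comp (Relation.Comp γ (fun x y => α x y ∧ β x y)) γ a b)) := by
  have hpα : PreservesRel p α := hpres α (by simp)
  have hpβ : PreservesRel p β := hpres β (by simp)
  have hpγ : PreservesRel p γ := hpres γ (by simp)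
  have hpδ : PreservesRel p δ := hpres δ (by simp)
  refine ⟨fun a b => ⟨?_, ?_⟩, fun a b => ⟨?_, ?_⟩⟩
  · exact maltsev_X₂_mp hp1 hp2 hα hβ hγ.refl hδ.refl hpα hpβ hpγ hpδ
  · exact maltsev_X₂_mp hp1 hp2 hα hγ hβ.refl hδ.refl hpα hpγ hpβ hpδ
  · exact maltsev_Y₁_mp hp1 hp2 hα hβ hγ.refl hpα hpβ hpγ
  · exact maltsev_Y₁_mp hp1 hp2 hα hγ hβ.refl hpα hpγ hpβ
end
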